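/- Let R be a Hecke symmetry on ℂ^N with parameter q ∈ ℂ \ {0,1,−1}, and let m, n be nonnegative integers with α = q^{n−m}·(q^{m−n} − q^{n−m})/(q − q⁻¹). Let 𝒜 be an associative unital ℂ-algebra and C a fixed N×N complex matrix satisfying: (i) Tr_{R(2)} R₁₂ = I_N; (ii) Tr_R I_N = α; (iii) for every N×N matrix A over 𝒜, Tr_{R(2)}(R₁₂·A₁·R₁₂⁻¹) = (Tr_R A)·I_N = Tr_{R(2)}(R₁₂⁻¹·A₁·R₁₂). Set f(x) = −(q−q⁻¹)x/(x−1), ℛ(x) = R + f(x)·I, and c = q^{2(m−n)}. Suppose L assigns to each u ∈ ℂ \ {0} an N×N matrix L(u) over 𝒜 such that for all u, v ∈ ℂ \ {0} with u/v, vc/u, uc/v, v/u all ≠ 1: ℛ(u/v)·L₁(u)·ℛ(vc/u)·L₁(v) = L₁(v)·ℛ(uc/v)·L₁(u)·ℛ(v/u). Then for all such u, v: (Tr_R L(u))·L(v) = L(v)·(Tr_R L(u)). -/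

import Mathlib

open Matrix

/-- `op12 X = X ⊗ I_N` acting on `V ⊗ V ⊗ V`. -/
def op12 {N : ℕ} (X : Matrix (Fin N × Fin N) (Fin N × Fin N) ℂ) :
    Matrix (Fin N × Fin N × Fin N) (Fin N × Fin N × Fin N) ℂ :=
  Matrix.of fun a b => X (a.1, a.2.1) (b.1, b.2.1) * (if a.2.2 = b.2.2 then 1 else 0)

/-- `op23 X = I_N ⊗ X` acting on `V ⊗ V ⊗ V`. -/
def op23 {N : ℕ} (X : Matrix (Fin N × Fin N) (Fin N × Fin N) ℂ) :
    Matrix (Fin N × Fin N × Fin N) (Fin N × Fin N × Fin N) ℂ :=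
  Matrix.of fun a b => (if a.1 = b.1 then 1 else 0) * X (a.2.1, a.2.2) (b.2.1, b.2.2)

/-- For an `N×N` matrix `X` with entries in `A`, `leg1 X = X ⊗ I_N`. -/
def leg1 {N : ℕ} {A : Type*} [Semiring A] (X : Matrix (Fin N) (Fin N) A) :
    Matrix (Fin N × Fin N) (Fin N × Fin N) A :=
  Matrix.of fun a b => X a.1 b.1 * (if a.2 = b.2 then 1 else 0)

/-- Embedding of a complex matrix into matrices over a `ℂ`-algebra `A`. -/
def emb {n : Type*} {A : Type*} [Semiring A] [Algebra ℂ A] (R : Matrix n n ℂ) :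
    Matrix n n A :=
  R.map (algebraMap ℂ A)

/-- The `R`-trace: `Tr_R X = Σ_{i,j} C^i_j X^j_i`. -/
def trR {N : ℕ} {A : Type*} [Ring A] [Algebra ℂ A]
    (C : Matrix (Fin N) (Fin N) ℂ) (X : Matrix (Fin N) (Fin N) A) : A :=
  ∑ i, ∑ j, C i j • X j i

/-- The partial `R`-trace over the second factor. -/
def trR2 {N : ℕ} {A : Type*} [Ring A] [Algebra ℂ A]
    (C : Matrix (Fin N) (Fin N) ℂ) (M : Matrix (Fin N × Fin N) (Fin N × Fin N) A) :
    Matrix (Fin N) (Fin N) A :=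
  Matrix.of fun r s => ∑ a, ∑ b, C a b • M (r, b) (s, a)


/-- The shift function of the Baxterized trigonometric `R`-matrix:
`f(x) = −(q−q⁻¹)x/(x−1)`. -/
noncomputable def fshift (q x : ℂ) : ℂ := -(q - q⁻¹) * x / (x - 1)

/-- `α = q^{n−m}·(m−n)_q`, the `R`-trace of the identity for bi-rank `(m|n)`. -/
noncomputable def alphaHecke (q : ℂ) (m n : ℕ) : ℂ :=
  q ^ ((n : ℤ) - m) * (q ^ ((m : ℤ) - n) - q ^ ((n : ℤ) - m)) / (q - q⁻¹)

/-! Apply the partial trace `Tr_{R(2)}` to both sides of the RS relation. It is a bimodule map for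
`X ↦ X₁`, so the outer factors `L₁(v)` come out and only the sandwich `(R + f)·L₁(u)·(R + g)` has
to be traced. The Hecke relation gives `R⁻¹ = R − (q − q⁻¹)`, so (i) and (iii) yield
`Tr_{R(2)}(R·L₁·R) = Tr_R L · I + (q − q⁻¹)·L`, and the sandwich traces to
`Tr_R L(u) · I + κ·L(u)` with `κ = (q − q⁻¹) + f + g + f·g·α`. In both Baxterized pairs the two
arguments multiply to `c`, and the critical charge is exactly the value with
`(q − q⁻¹)·α·c = c − 1`, which forces `κ = 0`. Both sides then collapse to `L(v)` times the scalar
matrix `Tr_R L(u) · I`. -/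

lemma emb_one {n A : Type*} [DecidableEq n] [Semiring A] [Algebra ℂ A] :
    (emb (1 : Matrix n n ℂ) : Matrix n n A) = 1 :=
  Matrix.map_one _ (map_zero _) (map_one _)

lemma emb_add_smul_one {n A : Type*} [Fintype n] [DecidableEq n] [Ring A] [Algebra ℂ A]
    (M : Matrix n n ℂ) (a : ℂ) : (emb (M + a • 1) : Matrix n n A) = emb M + a • 1 := by
  ext i j
  simp only [emb, Matrix.map_apply, Matrix.add_apply, Matrix.smul_apply, Matrix.one_apply]
  split_ifs <;> simp [Algebra.smul_def]

lemma inv_eq_sub_smul_one_of_hecke {n K : Type*} [Fintype n] [DecidableEq n] [Field K]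
    {q : K} (hq0 : q ≠ 0) {R : Matrix n n K}
    (hR : (R - q • (1 : Matrix n n K)) * (R + q⁻¹ • (1 : Matrix n n K)) = 0) :
    R⁻¹ = R - (q - q⁻¹) • 1 := by
  refine Matrix.inv_eq_right_inv ?_
  have : R * (R - (q - q⁻¹) • 1) = (R - q • 1) * (R + q⁻¹ • 1) + 1 := by
    simp only [mul_sub, sub_mul, mul_add, Matrix.mul_smul, Matrix.smul_mul, mul_one, one_mul,
      smul_smul, inv_mul_cancel₀ hq0, one_smul, sub_smul]
    abel
  rw [this, hR, zero_add]

lemma mul_alphaHecke {q : ℂ} (hq0 : q ≠ 0) (hq : q - q⁻¹ ≠ 0) (m n : ℕ) :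
    (q - q⁻¹) * alphaHecke q m n * q ^ (2 * ((m : ℤ) - n)) = q ^ (2 * ((m : ℤ) - n)) - 1 := by
  have hμ : q ^ ((m : ℤ) - n) ≠ 0 := zpow_ne_zero _ hq0
  rw [alphaHecke, show (n : ℤ) - m = -((m : ℤ) - n) by ring, _root_.zpow_neg, mul_comm 2,
    _root_.zpow_mul]
  generalize q - q⁻¹ = l at hq ⊢
  field_simp

lemma sandwich_coeff_eq_zero {q τ x y : ℂ} (hx : x ≠ 1) (hy : y ≠ 1)
    (hτ : (q - q⁻¹) * τ * (x * y) = x * y - 1) :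
    (q - q⁻¹) + fshift q x + fshift q y + fshift q x * fshift q y * τ = 0 := by
  have hx1 : x - 1 ≠ 0 := sub_ne_zero.mpr hx
  have hy1 : y - 1 ≠ 0 := sub_ne_zero.mpr hy
  unfold fshift
  generalize q - q⁻¹ = l at hτ ⊢
  field_simp
  linear_combination l * hτ

section PartialTrace

variable {N : ℕ} {A : Type*} [Ring A] [Algebra ℂ A] (C : Matrix (Fin N) (Fin N) ℂ)

lemma trR2_add (M M' : Matrix (Fin N × Fin N) (Fin N × Fin N) A) :
    trR2 C (M + M') = trR2 C M + trR2 C M' := by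
  ext r s
  simp [trR2, smul_add, Finset.sum_add_distrib]

lemma trR2_smul (a : ℂ) (M : Matrix (Fin N × Fin N) (Fin N × Fin N) A) :
    trR2 C (a • M) = a • trR2 C M := by
  ext r s
  simp [trR2, Finset.smul_sum, smul_comm a]

lemma trR2_mul_leg1 (M : Matrix (Fin N × Fin N) (Fin N × Fin N) A)
    (X : Matrix (Fin N) (Fin N) A) : trR2 C (M * leg1 X) = trR2 C M * X := by
  ext r s
  simp only [trR2, leg1, Matrix.mul_apply, Matrix.of_apply, Fintype.sum_prod_type, mul_ite,
    mul_one, mul_zero, Finset.sum_ite_eq', Finset.mem_univ, if_true, Finset.smul_sum,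
    Finset.sum_mul, smul_mul_assoc]
  exact (Finset.sum_comm.trans (Finset.sum_congr rfl fun _ _ => Finset.sum_comm)).symm

lemma trR2_leg1_mul (X : Matrix (Fin N) (Fin N) A)
    (M : Matrix (Fin N × Fin N) (Fin N × Fin N) A) : trR2 C (leg1 X * M) = X * trR2 C M := by
  ext r s
  simp only [trR2, leg1, Matrix.mul_apply, Matrix.of_apply, Fintype.sum_prod_type, ite_mul,
    mul_ite, mul_one, zero_mul, mul_zero, Finset.sum_ite_eq, Finset.mem_univ, if_true,
    Finset.smul_sum, Finset.mul_sum, mul_smul_comm]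
  exact (Finset.sum_comm.trans (Finset.sum_congr rfl fun _ _ => Finset.sum_comm)).symm

lemma trR2_leg1 (X : Matrix (Fin N) (Fin N) A) :
    trR2 C (leg1 X) = trR C (1 : Matrix (Fin N) (Fin N) ℂ) • X := by
  ext r s
  simp [trR2, trR, leg1, Matrix.one_apply, Finset.sum_smul]

lemma trR2_emb (M : Matrix (Fin N × Fin N) (Fin N × Fin N) ℂ) :
    trR2 C (emb M : Matrix _ _ A) = emb (trR2 C M) := by
  ext r s
  simp [trR2, emb, Algebra.smul_def]

variable {C}

lemma trR2_add_smul_one_sandwich {E : Matrix (Fin N × Fin N) (Fin N × Fin N) A}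
    (hE : trR2 C E = 1) (X : Matrix (Fin N) (Fin N) A) (f g : ℂ) :
    trR2 C ((E + f • 1) * leg1 X * (E + g • 1)) =
      trR2 C (E * leg1 X * E) + (f + g + f * g * trR C (1 : Matrix (Fin N) (Fin N) ℂ)) • X := by
  have hexpand : (E + f • 1) * leg1 X * (E + g • 1) =
      E * leg1 X * E + g • (E * leg1 X) + f • (leg1 X * E) + (f * g) • leg1 X := by
    simp only [add_mul, mul_add, Matrix.smul_mul, Matrix.mul_smul, one_mul, mul_one, smul_smul]
    rw [mul_comm g f]
    abel
  rw [hexpand, trR2_add, trR2_add, trR2_add, trR2_smul, trR2_smul, trR2_smul, trR2_mul_leg1,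
    trR2_leg1_mul, hE, trR2_leg1, one_mul, mul_one, smul_smul]
  module

lemma trR2_emb_sandwich_of_inv {R : Matrix (Fin N × Fin N) (Fin N × Fin N) ℂ} {l : ℂ}
    (hRinv : R⁻¹ = R - l • 1) (hR : trR2 C R = 1) (X : Matrix (Fin N) (Fin N) A) :
    trR2 C (emb R * leg1 X * emb R) = trR2 C (emb R * leg1 X * emb R⁻¹) + l • X := by
  rw [hRinv, sub_eq_add_neg, ← neg_smul, emb_add_smul_one, mul_add, Matrix.mul_smul, mul_one,
    trR2_add, trR2_smul, trR2_mul_leg1, trR2_emb, hR, emb_one, one_mul]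
  module

end PartialTrace

theorem first_power_sum_central_RS_general {N : ℕ} {A : Type*} [Ring A] [Algebra ℂ A]
    (q : ℂ) (hq0 : q ≠ 0) (hq1 : q ≠ 1) (hqm1 : q ≠ -1)
    (m n : ℕ)
    (R : Matrix (Fin N × Fin N) (Fin N × Fin N) ℂ)
    (hHecke : (R - q • (1 : Matrix (Fin N × Fin N) (Fin N × Fin N) ℂ)) *
      (R + q⁻¹ • (1 : Matrix (Fin N × Fin N) (Fin N × Fin N) ℂ)) = 0)
    (C : Matrix (Fin N) (Fin N) ℂ)
    (hi : trR2 C R = (1 : Matrix (Fin N) (Fin N) ℂ))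
    (hii : trR C (1 : Matrix (Fin N) (Fin N) ℂ) = alphaHecke q m n)
    (hiii1 : ∀ X : Matrix (Fin N) (Fin N) A,
      trR2 C (emb R * leg1 X * emb R⁻¹) = trR C X • (1 : Matrix (Fin N) (Fin N) A))
    (c : ℂ) (hcrit : c = q ^ (2 * ((m : ℤ) - n)))
    (L : ℂ → Matrix (Fin N) (Fin N) A)
    (hRS : ∀ u v : ℂ, u ≠ 0 → v ≠ 0 →
      u / v ≠ 1 → v * c / u ≠ 1 → u * c / v ≠ 1 → v / u ≠ 1 →
      emb (R + fshift q (u / v) • (1 : Matrix (Fin N × Fin N) (Fin N × Fin N) ℂ)) *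
          leg1 (L u) *
          emb (R + fshift q (v * c / u) • (1 : Matrix (Fin N × Fin N) (Fin N × Fin N) ℂ)) *
          leg1 (L v) =
        leg1 (L v) *
          emb (R + fshift q (u * c / v) • (1 : Matrix (Fin N × Fin N) (Fin N × Fin N) ℂ)) *
          leg1 (L u) *
          emb (R + fshift q (v / u) • (1 : Matrix (Fin N × Fin N) (Fin N × Fin N) ℂ)))
    (u v : ℂ) (hu : u ≠ 0) (hv : v ≠ 0)
    (h1 : u / v ≠ 1) (h2 : v * c / u ≠ 1) (h3 : u * c / v ≠ 1) (h4 : v / u ≠ 1) :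
    trR C (L u) • L v = L v * (trR C (L u) • (1 : Matrix (Fin N) (Fin N) A)) := by
  have hq : q - q⁻¹ ≠ 0 := by
    rw [sub_ne_zero, Ne, self_eq_inv₀]
    tauto
  have hτ {x y : ℂ} (hxy : x * y = c) :
      (q - q⁻¹) * trR C (1 : Matrix (Fin N) (Fin N) ℂ) * (x * y) = x * y - 1 := by
    rw [hxy, hii, hcrit]
    exact mul_alphaHecke hq0 hq m n
  have hsandwich (f g : ℂ) :
      trR2 C ((emb R + f • 1) * leg1 (L u) * (emb R + g • 1)) =
        trR C (L u) • 1 +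
          ((q - q⁻¹) + f + g + f * g * trR C (1 : Matrix (Fin N) (Fin N) ℂ)) • L u := by
    rw [trR2_add_smul_one_sandwich (by rw [trR2_emb, hi, emb_one]),
      trR2_emb_sandwich_of_inv (inv_eq_sub_smul_one_of_hecke hq0 hHecke) hi, hiii1,
      add_assoc, ← add_smul]
    congr 2
    ring
  have htr := congrArg (trR2 C) (hRS u v hu hv h1 h2 h3 h4)
  rw [emb_add_smul_one, emb_add_smul_one, emb_add_smul_one, emb_add_smul_one,
    show ∀ (Y : Matrix (Fin N) (Fin N) A) (P Q S : Matrix (Fin N × Fin N) (Fin N × Fin N) A),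
      leg1 Y * P * Q * S = leg1 Y * (P * Q * S) by simp only [Matrix.mul_assoc, implies_true],
    trR2_mul_leg1, trR2_leg1_mul, hsandwich, hsandwich] at htr
  rwa [sandwich_coeff_eq_zero h1 h2 (hτ (by field_simp)),
    sandwich_coeff_eq_zero h3 h4 (hτ (by field_simp)),
    zero_smul, add_zero, Matrix.smul_mul, Matrix.one_mul] at htr

/-- in an algebra of RS type with the critical charge `c = q^{2(m−n)}`,
the first quantum power sum `Tr_R L(u)` commutes with all generators `L(v)`. -/
theorem first_power_sum_central_RS {N : ℕ} {A : Type*} [Ring A] [Algebra ℂ A]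
    (q : ℂ) (hq0 : q ≠ 0) (hq1 : q ≠ 1) (hqm1 : q ≠ -1)
    (m n : ℕ)
    (R : Matrix (Fin N × Fin N) (Fin N × Fin N) ℂ)
    (hRinv : IsUnit R)
    (hbraid : op12 R * op23 R * op12 R = op23 R * op12 R * op23 R)
    (hHecke : (R - q • (1 : Matrix (Fin N × Fin N) (Fin N × Fin N) ℂ)) *
      (R + q⁻¹ • (1 : Matrix (Fin N × Fin N) (Fin N × Fin N) ℂ)) = 0)
    (C : Matrix (Fin N) (Fin N) ℂ)
    (hi : trR2 C R = (1 : Matrix (Fin N) (Fin N) ℂ))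
    (hii : trR C (1 : Matrix (Fin N) (Fin N) ℂ) = alphaHecke q m n)
    (hiii1 : ∀ X : Matrix (Fin N) (Fin N) A,
      trR2 C (emb R * leg1 X * emb R⁻¹) = trR C X • (1 : Matrix (Fin N) (Fin N) A))
    (hiii2 : ∀ X : Matrix (Fin N) (Fin N) A,
      trR2 C (emb R⁻¹ * leg1 X * emb R) = trR C X • (1 : Matrix (Fin N) (Fin N) A))
    (c : ℂ) (hcrit : c = q ^ (2 * ((m : ℤ) - n)))
    (L : ℂ → Matrix (Fin N) (Fin N) A)
    (hRS : ∀ u v : ℂ, u ≠ 0 → v ≠ 0 →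
      u / v ≠ 1 → v * c / u ≠ 1 → u * c / v ≠ 1 → v / u ≠ 1 →
      emb (R + fshift q (u / v) • (1 : Matrix (Fin N × Fin N) (Fin N × Fin N) ℂ)) *
          leg1 (L u) *
          emb (R + fshift q (v * c / u) • (1 : Matrix (Fin N × Fin N) (Fin N × Fin N) ℂ)) *
          leg1 (L v) =
        leg1 (L v) *
          emb (R + fshift q (u * c / v) • (1 : Matrix (Fin N × Fin N) (Fin N × Fin N) ℂ)) *
          leg1 (L u) *
          emb (R + fshift q (v / u) • (1 : Matrix (Fin N × Fin N) (Fin N × Fin N) ℂ)))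
    (u v : ℂ) (hu : u ≠ 0) (hv : v ≠ 0)
    (h1 : u / v ≠ 1) (h2 : v * c / u ≠ 1) (h3 : u * c / v ≠ 1) (h4 : v / u ≠ 1) :
    trR C (L u) • L v = L v * (trR C (L u) • (1 : Matrix (Fin N) (Fin N) A)) :=
  first_power_sum_central_RS_general q hq0 hq1 hqm1 m n R hHecke C hi hii hiii1 c hcrit L hRS u v hu
    hv h1 h2 h3 h4
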